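/- arXiv:1208.6336 — 3 statements merged into one kernel-verified Lean document; each statement's English description precedes it below -/
import Mathlib

section
/- Let r, n be positive integers and let p, p', q, q' be positive divisors of r such that pq = p'q' divides rn. If gcd(p,n) = gcd(p',n) and gcd(q,n) = gcd(q',n), then G(r,p,q,n) and G(r,p',q',n) are isomorphic as groups. -/
open SemidirectProduct Multiplicative

/-- The action of `Equiv.Perm (Fin n)` on `(ℤ/rℤ)ⁿ` (written multiplicatively)
by permuting coordinates: `(π • x) i = x (π⁻¹ i)`. -/
def permAct (r n : ℕ) : Equiv.Perm (Fin n) →* MulAut (Multiplicative (Fin n → ZMod r)) where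
  toFun π := AddEquiv.toMultiplicative
    { Equiv.arrowCongr π (Equiv.refl (ZMod r)) with
      map_add' := fun _ _ => rfl }
  map_one' := by ext x; rfl
  map_mul' := by intro π σ; ext x; rfl

/-- The wreath product `G(r,n) = (ℤ/rℤ)ⁿ ⋊ Sₙ`. -/
abbrev GG (r n : ℕ) :=
  SemidirectProduct (Multiplicative (Fin n → ZMod r)) (Equiv.Perm (Fin n)) (permAct r n)

/-- Summing the coordinates, as a homomorphism. -/
def sumHom (r n : ℕ) : Multiplicative (Fin n → ZMod r) →* Multiplicative (ZMod r) where
  toFun x := ofAdd (∑ i, toAdd x i)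
  map_one' := by simp
  map_mul' x y := by
    simp [Finset.sum_add_distrib, ofAdd_add]

/-- `Δ : G(r,n) → ℤ/rℤ`, the sum of the "colors" of an element. -/
def DeltaHom (r n : ℕ) : GG r n →* Multiplicative (ZMod r) :=
  SemidirectProduct.lift (sumHom r n) 1 (by
    intro g
    refine MonoidHom.ext fun x => ?_
    show ofAdd (∑ i, toAdd x (g.symm i)) = _
    rw [Equiv.sum_comp g.symm (toAdd x)]
    simp [sumHom])

/-- The subgroup `p·(ℤ/rℤ)` of `ℤ/rℤ` (written multiplicatively). -/
def pZ (r p : ℕ) : Subgroup (Multiplicative (ZMod r)) :=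
  AddSubgroup.toSubgroup (AddSubgroup.zmultiples (p : ZMod r))

/-- The reflection group `G(r,p,n)` as a subgroup of `G(r,n)`. -/
def Grpn (r p n : ℕ) : Subgroup (GG r n) := (pZ r p).comap (DeltaHom r n)

/-- The scalar element `c = (1,(1,…,1))` of `G(r,n)`. -/
def cEl (r n : ℕ) : GG r n := inl (ofAdd fun _ => (1 : ZMod r))

/-- The cyclic subgroup `C_q = ⟨c^{r/q}⟩` of `G(r,n)`. -/
def CsubQ (r q n : ℕ) : Subgroup (GG r n) := Subgroup.zpowers (cEl r n ^ (r / q))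

/-- `C_q` viewed as a subgroup of `G(r,p,n)`. -/
def CsubIn (r p q n : ℕ) : Subgroup ↥(Grpn r p n) :=
  (CsubQ r q n).comap (Grpn r p n).subtype

lemma cEl_mem_center (r n : ℕ) : cEl r n ∈ Subgroup.center (GG r n) := by
  rw [Subgroup.mem_center_iff]
  intro g
  have h1 : (permAct r n g.right) (ofAdd fun _ => (1 : ZMod r)) =
      ofAdd fun _ => (1 : ZMod r) := rfl
  refine SemidirectProduct.ext ?_ ?_
  · simp [mul_left, cEl, h1, mul_comm]
  · simp [mul_right, cEl]

lemma CsubQ_le_center (r q n : ℕ) : CsubQ r q n ≤ Subgroup.center (GG r n) :=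
  Subgroup.zpowers_le.mpr (pow_mem (cEl_mem_center r n) _)

instance CsubIn_normal (r p q n : ℕ) : (CsubIn r p q n).Normal := by
  constructor
  intro x hx g
  have hx' : (x : GG r n) ∈ CsubQ r q n := hx
  have hc := Subgroup.mem_center_iff.mp (CsubQ_le_center r q n hx') (g : GG r n)
  have key : ((g * x * g⁻¹ : ↥(Grpn r p n)) : GG r n) = (x : GG r n) := by
    push_cast
    rw [hc]
    group
  show ((g * x * g⁻¹ : ↥(Grpn r p n)) : GG r n) ∈ CsubQ r q n
  rw [key]
  exact hx'

/-- The projective reflection group `G(r,p,q,n) = G(r,p,n)/C_q`. -/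
abbrev Gpq (r p q n : ℕ) := ↥(Grpn r p n) ⧸ CsubIn r p q n

/-- The quotient map `G(r,p,n) → G(r,p,q,n)`. -/
def Gmk (r p q n : ℕ) : ↥(Grpn r p n) →* Gpq r p q n := QuotientGroup.mk' (CsubIn r p q n)

open scoped Classical in
/-- The image in `G(r,p,q,n)` of an element of `G(r,n)` (junk value `1` if it does
not lie in `G(r,p,n)`). -/
noncomputable def toGpq (r p q n : ℕ) (g : GG r n) : Gpq r p q n :=
  if h : g ∈ Grpn r p n then Gmk r p q n ⟨g, h⟩ else 1

/-!
For `b ∈ ℤ/rℤ` consider `g ↦ g · c^(b·m)` on `G(r,p,n)`, where `Δ(g) = p·m`. Since `m` is only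
determined up to the annihilator of `p`, this is a homomorphism only modulo `C_{q'}`; it lands in
`G(r,p',n)` and descends to an injective map `G(r,p,q,n) → G(r,p',q',n)` under congruence
conditions on `b` (`IsTwist`). These conditions are local at the primes `ℓ ∣ r`, so by the Chinese
remainder theorem it suffices to solve them in `ℤ/ℓ^e`. There, up to units, `p, p', n` are
`ℓ^A, ℓ^A', ℓ^N`, the gcd conditions force `N ≤ min A A'` unless `A = A'`, and
`b = ℓ^(A'-N) - ℓ^(A-N)` works. Injective homomorphisms in both directions between finite groups
give the isomorphism.
-/

/-- With `R = ℤ/rℤ`, `c = r/q`, `c' = r/q'`, so that `C_q` consists of the scalars `s` with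
`c ∣ s`: the first condition puts the image of `g ↦ g · c^(b·Δ(g)/p)` in `G(r,p',n)`, the second
says that this map sends `C_q`, and nothing else, into `C_{q'}`. -/
structure IsTwist {R : Type*} [CommRing R] (n p c p' c' b : R) : Prop where
  dvd_add_mul : p' ∣ p + b * n
  dvd_add_mul_iff : ∀ s m, p * m = n * s → (c' ∣ s + b * m ↔ c ∣ s)

namespace IsTwist

variable {R S : Type*} [CommRing R] [CommRing S] {n p c p' c' b : R}

theorem comap (e : R ≃+* S) (h : IsTwist (e n) (e p) (e c) (e p') (e c') (e b)) :
    IsTwist n p c p' c' b where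
  dvd_add_mul := by
    simpa only [← map_dvd_iff e, map_add, map_mul] using h.dvd_add_mul
  dvd_add_mul_iff s m hsm := by
    simpa only [← map_dvd_iff e, map_add, map_mul] using
      h.dvd_add_mul_iff (e s) (e m) (by simp only [← map_mul, hsm])

theorem pi {ι : Type*} {R : ι → Type*} [∀ i, CommRing (R i)] {n p c p' c' b : ∀ i, R i}
    (h : ∀ i, IsTwist (n i) (p i) (c i) (p' i) (c' i) (b i)) : IsTwist n p c p' c' b where
  dvd_add_mul := pi_dvd_iff.mpr fun i => (h i).dvd_add_mul
  dvd_add_mul_iff s m hsm := by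
    simp only [pi_dvd_iff]
    exact forall_congr' fun i => (h i).dvd_add_mul_iff (s i) (m i) (congrFun hsm i)

theorem exists_of_associated (h : IsTwist n p c p' c' b) {n₂ p₂ c₂ p₂' c₂' : R}
    (hn : Associated n n₂) (hp : Associated p p₂) (hc : Associated c c₂)
    (hp' : Associated p' p₂') (hc' : Associated c' c₂') :
    ∃ b₂, IsTwist n₂ p₂ c₂ p₂' c₂' b₂ := by
  obtain ⟨ν, rfl⟩ := hn
  obtain ⟨α, rfl⟩ := hp
  refine ⟨b * α * ν⁻¹, ?_, fun s m hsm => ?_⟩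
  · have : p * α + b * α * ν⁻¹ * (n * ν) = (p + b * n) * α := by
      linear_combination (b * α * n) * ν.mul_inv
    rw [this]
    exact hp'.symm.dvd.trans (h.dvd_add_mul.mul_right _)
  · have hsm' : p * (α * ν⁻¹ * m) = n * s := by
      linear_combination (ν⁻¹ : Rˣ) * hsm + (n * s) * ν.inv_mul
    rw [← hc.dvd_iff_dvd_left, ← hc'.dvd_iff_dvd_left, ← h.dvd_add_mul_iff s _ hsm', mul_assoc,
      mul_assoc, mul_assoc]

theorem dvd_mul_of_mul_eq_zero (h : IsTwist n p c p' c' b) {m : R} (hm : p * m = 0) :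
    c' ∣ b * m := by
  simpa using (h.dvd_add_mul_iff 0 m (by simp [hm])).mpr (dvd_zero c)

end IsTwist

namespace ZMod

variable {ℓ : ℕ}

theorem pow_dvd_of_pow_mul_eq_zero (hℓ : ℓ ≠ 0) {e k : ℕ} (hk : k ≤ e) {x : ZMod (ℓ ^ e)}
    (h : (ℓ : ZMod (ℓ ^ e)) ^ k * x = 0) : (ℓ : ZMod (ℓ ^ e)) ^ (e - k) ∣ x := by
  obtain ⟨X, rfl⟩ := intCast_surjective x
  have hX : (ℓ : ℤ) ^ k * (ℓ : ℤ) ^ (e - k) ∣ (ℓ : ℤ) ^ k * X := by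
    rw [← pow_add, Nat.add_sub_cancel' hk]
    exact_mod_cast (intCast_zmod_eq_zero_iff_dvd _ _).mp (by push_cast; exact h)
  simpa using map_dvd (Int.castRingHom (ZMod (ℓ ^ e)))
    ((mul_dvd_mul_iff_left (pow_ne_zero _ (by exact_mod_cast hℓ))).mp hX)

theorem pow_add_dvd_pow_mul_iff (hℓ : ℓ ≠ 0) {e k a : ℕ} (hka : k + a ≤ e) {x : ZMod (ℓ ^ e)} :
    (ℓ : ZMod (ℓ ^ e)) ^ (k + a) ∣ (ℓ : ZMod (ℓ ^ e)) ^ k * x ↔ (ℓ : ZMod (ℓ ^ e)) ^ a ∣ x := by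
  refine ⟨fun ⟨y, hy⟩ => ?_, fun h => pow_add (ℓ : ZMod (ℓ ^ e)) k a ▸ mul_dvd_mul_left _ h⟩
  have h0 : (ℓ : ZMod (ℓ ^ e)) ^ k * (x - (ℓ : ZMod (ℓ ^ e)) ^ a * y) = 0 := by
    rw [mul_sub, hy, pow_add]; ring
  have := (pow_dvd_pow _ (by omega : a ≤ e - k)).trans (pow_dvd_of_pow_mul_eq_zero hℓ (by omega) h0)
  simpa using dvd_add this (dvd_mul_right _ y)

theorem isTwist_pow (hℓ : ℓ ≠ 0) {e A A' B B' N : ℕ} (hB : B ≤ e) (hB' : B' ≤ e)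
    (hAB : A + B = A' + B') (hAN : min A N = min A' N) (hBN : min B N = min B' N)
    (hle : A + B ≤ e + N) :
    IsTwist ((ℓ : ZMod (ℓ ^ e)) ^ N) ((ℓ : ZMod (ℓ ^ e)) ^ A) ((ℓ : ZMod (ℓ ^ e)) ^ (e - B))
      ((ℓ : ZMod (ℓ ^ e)) ^ A') ((ℓ : ZMod (ℓ ^ e)) ^ (e - B'))
      ((ℓ : ZMod (ℓ ^ e)) ^ (A' - N) - (ℓ : ZMod (ℓ ^ e)) ^ (A - N)) := by
  set π := (ℓ : ZMod (ℓ ^ e))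
  rcases eq_or_ne A A' with rfl | hA
  · obtain rfl : B = B' := by omega
    exact ⟨by simp, fun s m _ => by simp⟩
  have hpow : ∀ {i j : ℕ}, j ≤ i → π ^ (i - j) * π ^ j = π ^ i := fun h => by
    rw [← pow_add, Nat.sub_add_cancel h]
  refine ⟨?_, fun s m hsm => ?_⟩
  · rw [sub_mul, hpow (by omega), hpow (by omega), add_sub_cancel]
  -- `s ≡ π ^ (A - N) * m` modulo `π ^ (e - N)`, and both sides of the `↔` reduce to
  -- `π ^ (e + N - (A + B)) ∣ m`
  obtain ⟨t, ht⟩ : π ^ (e - N) ∣ s - π ^ (A - N) * m := by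
    refine pow_dvd_of_pow_mul_eq_zero hℓ (by omega) ?_
    rw [mul_sub, ← mul_assoc, ← pow_add, Nat.add_sub_cancel' (by omega), hsm, sub_self]
  have hs : s = π ^ (A - N) * m + π ^ (e - N) * t := by rw [← ht]; ring
  have hdvd_iff : ∀ {X Y : ℕ}, X + Y = A + B → N ≤ X → N ≤ Y → Y ≤ e →
      (π ^ (e - Y) ∣ π ^ (X - N) * m + π ^ (e - N) * t ↔ π ^ (e + N - (A + B)) ∣ m) := by
    intro X Y hXY hX hY hYe
    rw [dvd_add_left ((pow_dvd_pow π (by omega : e - Y ≤ e - N)).mul_right t),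
      show e - Y = (X - N) + (e + N - (A + B)) by omega]
    exact pow_add_dvd_pow_mul_iff hℓ (by omega)
  rw [show s + (π ^ (A' - N) - π ^ (A - N)) * m = π ^ (A' - N) * m + π ^ (e - N) * t by
    rw [hs]; ring, hdvd_iff hAB.symm (by omega) (by omega) hB', hs,
    hdvd_iff rfl (by omega) (by omega) hB]

theorem associated_pow_factorization (hℓ : ℓ.Prime) (e : ℕ) {x : ℕ} (hx : x ≠ 0) :
    Associated ((ℓ : ZMod (ℓ ^ e)) ^ x.factorization ℓ) (x : ZMod (ℓ ^ e)) := by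
  have hu : IsUnit ((ordCompl[ℓ] x : ℕ) : ZMod (ℓ ^ e)) :=
    (isUnit_iff_coprime _ _).mpr ((Nat.coprime_ordCompl hℓ hx).pow_left e).symm
  conv_rhs => rw [← Nat.ordProj_mul_ordCompl_eq_self x ℓ]
  push_cast
  exact associated_mul_unit_right _ _ hu

end ZMod

section Existence

variable {r n p q p' q' : ℕ} (hr : r ≠ 0) (hn : n ≠ 0) (hp : p ∣ r) (hq : q ∣ r) (hp' : p' ∣ r)
  (hq' : q' ∣ r) (hprod : p * q = p' * q') (hdvd : p * q ∣ r * n)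
  (h1 : p.gcd n = p'.gcd n) (h2 : q.gcd n = q'.gcd n)

include hr hn hp hq hp' hq' hprod hdvd h1 h2 in
theorem exists_isTwist_primePow {ℓ : ℕ} (hℓ : ℓ.Prime) :
    ∃ b : ZMod (ℓ ^ r.factorization ℓ), IsTwist (n : ZMod (ℓ ^ r.factorization ℓ)) p
      ↑(r / q) p' ↑(r / q') b := by
  have ne_zero {d} (hd : d ∣ r) : d ≠ 0 := ne_zero_of_dvd_ne_zero hr hd
  have v_le {d} (hd : d ∣ r) : d.factorization ℓ ≤ r.factorization ℓ :=
    (Nat.factorization_le_iff_dvd (ne_zero hd) hr).mpr hd ℓ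
  have v_div {d} (hd : d ∣ r) :
      (r / d).factorization ℓ = r.factorization ℓ - d.factorization ℓ := by
    rw [Nat.factorization_div hd, Finsupp.tsub_apply]
  have v_gcd {d} (hd : d ∣ r) :
      (d.gcd n).factorization ℓ = min (d.factorization ℓ) (n.factorization ℓ) := by
    rw [Nat.factorization_gcd (ne_zero hd) hn]; rfl
  have hAB := congrArg (·.factorization ℓ) hprod
  have hle := (Nat.factorization_le_iff_dvd (mul_ne_zero (ne_zero hp) (ne_zero hq))
    (mul_ne_zero hr hn)).mpr hdvd ℓ
  simp only [Nat.factorization_mul (ne_zero hp) (ne_zero hq),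
    Nat.factorization_mul (ne_zero hp') (ne_zero hq'), Nat.factorization_mul hr hn,
    Finsupp.add_apply] at hAB hle
  have assoc {x} (hx : x ≠ 0) := ZMod.associated_pow_factorization hℓ (r.factorization ℓ) hx
  have hrq {d} (hd : d ∣ r) : r / d ≠ 0 := (Nat.div_ne_zero_iff_of_dvd hd).mpr ⟨hr, ne_zero hd⟩
  refine (ZMod.isTwist_pow hℓ.ne_zero (v_le hq) (v_le hq') hAB ?_ ?_ hle).exists_of_associated
    (assoc hn) (assoc (ne_zero hp)) ?_ (assoc (ne_zero hp')) ?_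
  · rw [← v_gcd hp, ← v_gcd hp', h1]
  · rw [← v_gcd hq, ← v_gcd hq', h2]
  · simpa only [v_div hq] using assoc (hrq hq)
  · simpa only [v_div hq'] using assoc (hrq hq')

include hr hn hp hq hp' hq' hprod hdvd h1 h2 in
theorem exists_isTwist : ∃ b : ZMod r, IsTwist (n : ZMod r) p ↑(r / q) p' ↑(r / q') b := by
  choose b hb using fun ℓ : r.primeFactors =>
    exists_isTwist_primePow hr hn hp hq hp' hq' hprod hdvd h1 h2
      (Nat.prime_of_mem_primeFactors ℓ.2)
  refine ⟨(ZMod.equivPi _ hr).symm b, IsTwist.comap (ZMod.equivPi _ hr) ?_⟩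
  simp only [map_natCast, RingEquiv.apply_symm_apply]
  exact IsTwist.pi hb

end Existence

section Twist

variable {r n : ℕ}

def scalar (n : ℕ) (t : ZMod r) : GG r n := inl (ofAdd fun _ => t)

theorem scalar_add (n : ℕ) (s t : ZMod r) : scalar n (s + t) = scalar n s * scalar n t :=
  (map_mul inl (ofAdd fun _ => s) (ofAdd fun _ => t)).symm

theorem scalar_sub (n : ℕ) (s t : ZMod r) : scalar n (s - t) = scalar n s * (scalar n t)⁻¹ :=
  eq_mul_inv_of_mul_eq (by rw [← scalar_add, sub_add_cancel])

theorem scalar_mem_center (t : ZMod r) : scalar n t ∈ Subgroup.center (GG r n) := by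
  rw [Subgroup.mem_center_iff]
  intro g
  have h1 : (permAct r n g.right) (ofAdd fun _ => t) = ofAdd fun _ => t := rfl
  refine SemidirectProduct.ext ?_ ?_
  · simp [scalar, mul_left, h1, mul_comm]
  · simp [scalar, mul_right]

theorem toAdd_DeltaHom_scalar (t : ZMod r) : toAdd (DeltaHom r n (scalar n t)) = n * t := by
  simp [DeltaHom, scalar, sumHom]

theorem mem_Grpn_iff {p : ℕ} {g : GG r n} :
    g ∈ Grpn r p n ↔ (p : ZMod r) ∣ toAdd (DeltaHom r n g) := by
  rw [Grpn, Subgroup.mem_comap, pZ, Multiplicative.mem_toSubgroup,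
    AddSubgroup.mem_zmultiples_iff]
  simp only [zsmul_eq_mul]
  constructor
  · rintro ⟨k, hk⟩
    exact ⟨k, by rw [← hk, mul_comm]⟩
  · rintro ⟨x, hx⟩
    obtain ⟨k, rfl⟩ := ZMod.intCast_surjective x
    exact ⟨k, by rw [hx, mul_comm]⟩

theorem mem_CsubQ_iff {q : ℕ} {g : GG r n} :
    g ∈ CsubQ r q n ↔ ∃ s, ((r / q : ℕ) : ZMod r) ∣ s ∧ g = scalar n s := by
  have hpow (j : ℤ) :
      (cEl r n ^ (r / q)) ^ j = scalar n (((r / q : ℕ) : ZMod r) * (j : ZMod r)) := by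
    rw [cEl, ← map_pow, ← map_zpow]
    congr 1
    ext
    simp [mul_comm]
  simp only [CsubQ, Subgroup.mem_zpowers_iff, hpow]
  constructor
  · rintro ⟨j, rfl⟩
    exact ⟨_, dvd_mul_right _ _, rfl⟩
  · rintro ⟨s, ⟨x, rfl⟩, rfl⟩
    obtain ⟨j, rfl⟩ := ZMod.intCast_surjective x
    exact ⟨j, rfl⟩

theorem toAdd_DeltaHom_mul_scalar (g : GG r n) (t : ZMod r) :
    toAdd (DeltaHom r n (g * scalar n t)) = toAdd (DeltaHom r n g) + n * t := by
  rw [map_mul, toAdd_mul, toAdd_DeltaHom_scalar]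

variable {p q p' q' : ℕ}

theorem mem_CsubIn_iff {x : Grpn r p n} : x ∈ CsubIn r p q n ↔ (x : GG r n) ∈ CsubQ r q n :=
  Iff.rfl

noncomputable def deltaDiv (g : Grpn r p n) : ZMod r := (mem_Grpn_iff.mp g.2).choose

theorem toAdd_DeltaHom_eq_mul_deltaDiv (g : Grpn r p n) :
    toAdd (DeltaHom r n g) = p * deltaDiv g :=
  (mem_Grpn_iff.mp g.2).choose_spec

noncomputable def twist (b : ZMod r) (g : Grpn r p n) : GG r n := g * scalar n (b * deltaDiv g)

theorem twist_mem {b : ZMod r} (hb : (p' : ZMod r) ∣ p + b * n) (g : Grpn r p n) :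
    twist b g ∈ Grpn r p' n := by
  rw [mem_Grpn_iff, twist, toAdd_DeltaHom_mul_scalar, toAdd_DeltaHom_eq_mul_deltaDiv,
    show (p : ZMod r) * deltaDiv g + n * (b * deltaDiv g) = (p + b * n) * deltaDiv g by ring]
  exact hb.mul_right _

theorem twist_mul (b : ZMod r) (g h : Grpn r p n) :
    twist b (g * h) = twist b g * twist b h *
      scalar n (b * (deltaDiv (g * h) - deltaDiv g - deltaDiv h)) := by
  have hc := Subgroup.mem_center_iff.mp (scalar_mem_center (n := n) (b * deltaDiv g))
  rw [twist, twist, twist, Subgroup.coe_mul, show b * deltaDiv (g * h) = b * deltaDiv g +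
    (b * deltaDiv h + b * (deltaDiv (g * h) - deltaDiv g - deltaDiv h)) by ring, scalar_add,
    scalar_add]
  simp only [mul_assoc]
  rw [← mul_assoc (h : GG r n), hc, mul_assoc]

theorem Gmk_eq_of_eq_mul_scalar {x y : Grpn r p' n} {s : ZMod r}
    (hs : ((r / q' : ℕ) : ZMod r) ∣ s) (h : (x : GG r n) = y * scalar n s) :
    Gmk r p' q' n x = Gmk r p' q' n y := by
  rw [Gmk, QuotientGroup.mk'_apply, QuotientGroup.mk'_apply]
  refine (QuotientGroup.eq.mpr (mem_CsubIn_iff.mpr (mem_CsubQ_iff.mpr ⟨s, hs, ?_⟩))).symm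
  simp [h]

variable {b : ZMod r} (hb : IsTwist (n : ZMod r) p ↑(r / q) p' ↑(r / q') b)

noncomputable def twistHom : Grpn r p n →* Gpq r p' q' n :=
  MonoidHom.mk' (fun g => Gmk r p' q' n ⟨twist b g, twist_mem hb.dvd_add_mul g⟩) fun g h => by
    rw [← map_mul]
    refine Gmk_eq_of_eq_mul_scalar (hb.dvd_mul_of_mul_eq_zero ?_) (twist_mul b g h)
    rw [mul_sub, mul_sub, ← toAdd_DeltaHom_eq_mul_deltaDiv, ← toAdd_DeltaHom_eq_mul_deltaDiv,
      ← toAdd_DeltaHom_eq_mul_deltaDiv, Subgroup.coe_mul, map_mul, toAdd_mul]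
    ring

include hb in
theorem twist_mem_CsubQ_iff (g : Grpn r p n) :
    twist b g ∈ CsubQ r q' n ↔ (g : GG r n) ∈ CsubQ r q n := by
  simp only [mem_CsubQ_iff]
  constructor
  · rintro ⟨s', hs', hg'⟩
    have hg : (g : GG r n) = scalar n (s' - b * deltaDiv g) := by
      rw [scalar_sub, ← hg', twist, mul_inv_cancel_right]
    refine ⟨_, (hb.dvd_add_mul_iff _ _ ?_).mp (by rwa [sub_add_cancel]), hg⟩
    rw [← toAdd_DeltaHom_eq_mul_deltaDiv, hg, toAdd_DeltaHom_scalar]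
  · rintro ⟨s, hs, hg⟩
    have hsm : (p : ZMod r) * deltaDiv g = n * s := by
      rw [← toAdd_DeltaHom_eq_mul_deltaDiv, hg, toAdd_DeltaHom_scalar]
    exact ⟨_, (hb.dvd_add_mul_iff _ _ hsm).mpr hs, by rw [twist, hg, scalar_add]⟩

theorem twistHom_eq_one_iff (g : Grpn r p n) : twistHom hb g = 1 ↔ g ∈ CsubIn r p q n := by
  rw [twistHom, MonoidHom.mk'_apply, Gmk, QuotientGroup.mk'_apply, QuotientGroup.eq_one_iff,
    mem_CsubIn_iff, mem_CsubIn_iff]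
  exact twist_mem_CsubQ_iff hb g

include hb in
theorem exists_injective_of_isTwist :
    ∃ f : Gpq r p q n →* Gpq r p' q' n, Function.Injective f := by
  refine ⟨QuotientGroup.lift _ (twistHom hb) fun g hg => (twistHom_eq_one_iff hb g).mpr hg, ?_⟩
  rw [injective_iff_map_eq_one]
  rintro ⟨g⟩ hg
  exact (QuotientGroup.eq_one_iff g).mpr ((twistHom_eq_one_iff hb g).mp hg)

end Twist

instance (r n : ℕ) [NeZero r] : Finite (GG r n) :=
  Finite.of_equiv _ SemidirectProduct.equivProd.symm

theorem nonempty_mulEquiv_of_injective {G H : Type*} [Group G] [Group H] [Finite G] [Finite H]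
    {f : G →* H} {g : H →* G} (hf : Function.Injective f) (hg : Function.Injective g) :
    Nonempty (G ≃* H) :=
  ⟨MulEquiv.ofBijective f (hf.bijective_of_nat_card_le (Nat.card_le_card_of_injective g hg))⟩

/-- If `gcd(p,n) = gcd(p',n)` and `gcd(q,n) = gcd(q',n)` (with
`pq = p'q'`), then `G(r,p,q,n)` and `G(r,p',q',n)` are isomorphic. -/
theorem Gpq_iso_of_gcd_eq
    (r n p p' q q' : ℕ) (hr : 0 < r) (hn : 0 < n)
    (hp : p ∣ r) (hp' : p' ∣ r) (hq : q ∣ r) (hq' : q' ∣ r)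
    (hprod : p * q = p' * q') (hdvd : p * q ∣ r * n)
    (h1 : Nat.gcd p n = Nat.gcd p' n) (h2 : Nat.gcd q n = Nat.gcd q' n) :
    Nonempty (Gpq r p q n ≃* Gpq r p' q' n) := by
  have : NeZero r := ⟨hr.ne'⟩
  obtain ⟨b, hb⟩ := exists_isTwist hr.ne' hn.ne' hp hq hp' hq' hprod hdvd h1 h2
  obtain ⟨b', hb'⟩ := exists_isTwist hr.ne' hn.ne' hp' hq' hp hq hprod.symm (hprod ▸ hdvd)
    h1.symm h2.symm
  obtain ⟨f, hf⟩ := exists_injective_of_isTwist hb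
  obtain ⟨f', hf'⟩ := exists_injective_of_isTwist hb'
  exact nonempty_mulEquiv_of_injective hf hf'
end

section
/- Let r, n be positive integers and let p, p', q, q' be positive divisors of r with pq = p'q' dividing rn, and assume gcd(p,n) = gcd(p',n) and gcd(q,n) = gcd(q',n). Call a prime special if it appears with different multiplicities in the prime factorizations of p and p'. Write rn/(pq) = η·δ, where δ is the largest divisor of rn/(pq) all of whose prime factors are special and η = (rn/(pq))/δ. Then δp divides r and δpq divides rn (so that G(r,δp,q,n) is well-defined), and G(r,p,q,n) ≅ G(r,δp,q,n) × (ℤ/δℤ). -/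
open SemidirectProduct Multiplicative

/-! For a prime `ℓ` at which `p` and `p'` differ, `gcd(p,n) = gcd(p',n)` forces
`v_ℓ(n) ≤ v_ℓ(p)`, and likewise `v_ℓ(n) ≤ v_ℓ(q)` since `q` and `q'` then differ at `ℓ` too.
Comparing valuations gives `δp ∣ r` and `δq ∣ r`; moreover `η = rn/(pqδ)` is coprime to `δ`.

Put `m = r/(δq)` and `z = c^m`. Then `z` is central, `Δ(z) = nm = pη`, and `z^δ = c^{r/q}`
generates `C_q`. Since `η` is invertible mod `δ`, every element of `G(r,p,n)` is `h z^k` with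
`h ∈ G(r,δp,n)`, and `z^k ∈ G(r,δp,n)` iff `δ ∣ k`. Hence
`G(r,p,n)/C_q ≅ G(r,δp,n)/C_q × ℤ/δℤ`, via `(h, k) ↦ h z^k`. -/

namespace Nat

variable (P : ℕ → Prop) [DecidablePred P] (e : ℕ)

def primePart : ℕ := (e.factorization.filter P).prod (· ^ ·)

theorem filter_factorization_le : e.factorization.filter P ≤ e.factorization :=
  Finsupp.le_def.mpr fun ℓ => by rw [Finsupp.filter_apply]; split_ifs <;> simp

theorem primePart_eq_prod_ite :
    primePart P e = ∏ π ∈ e.primeFactors, if P π then π ^ e.factorization π else 1 := by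
  rw [primePart, Finsupp.prod, Finsupp.support_filter, Finset.prod_filter, support_factorization]
  exact Finset.prod_congr rfl fun π _ => by split_ifs with h <;> simp [h]

theorem factorization_primePart : (primePart P e).factorization = e.factorization.filter P :=
  factorization_prod_pow_eq_self_of_le_factorization (filter_factorization_le P e)

theorem primePart_dvd : primePart P e ∣ e :=
  prod_pow_dvd_of_le_factorization (filter_factorization_le P e)

theorem primePart_ne_zero : primePart P e ≠ 0 :=
  Finsupp.prod_ne_zero_iff.mpr fun _ hℓ => pow_ne_zero _
    (prime_of_mem_primeFactors (Finsupp.support_mono (filter_factorization_le P e) hℓ)).ne_zero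

theorem of_mem_primeFactors_primePart {ℓ : ℕ} (hℓ : ℓ ∈ (primePart P e).primeFactors) : P ℓ := by
  rw [← support_factorization, factorization_primePart, Finsupp.support_filter] at hℓ
  exact (Finset.mem_filter.mp hℓ).2

theorem coprime_div_primePart : Coprime (e / primePart P e) (primePart P e) := by
  refine coprime_of_dvd fun ℓ hℓ hη hδ => ?_
  have hδℓ : ℓ ∈ (primePart P e).primeFactors :=
    mem_primeFactors.mpr ⟨hℓ, hδ, primePart_ne_zero P e⟩
  have hδe : (primePart P e).factorization ℓ = e.factorization ℓ := by
    rw [factorization_primePart, Finsupp.filter_apply,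
      if_pos (of_mem_primeFactors_primePart P e hδℓ)]
  have hδ1 := (hℓ.dvd_iff_one_le_factorization (primePart_ne_zero P e)).mp hδ
  have he : e ≠ 0 := by
    rintro rfl
    simp [hδe] at hδ1
  have hη1 := (hℓ.dvd_iff_one_le_factorization
    ((div_ne_zero_iff_of_dvd (primePart_dvd P e)).mpr ⟨he, primePart_ne_zero P e⟩)).mp hη
  rw [factorization_div (primePart_dvd P e), Finsupp.tsub_apply, hδe] at hη1
  omega

theorem factorization_le_of_gcd_eq {a a' n ℓ : ℕ} (ha : a ≠ 0) (ha' : a' ≠ 0) (hn : n ≠ 0)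
    (h : gcd a n = gcd a' n) (hℓ : a.factorization ℓ ≠ a'.factorization ℓ) :
    n.factorization ℓ ≤ a.factorization ℓ := by
  have hmin : (gcd a n).factorization ℓ = (gcd a' n).factorization ℓ := by rw [h]
  simp only [factorization_gcd ha hn, factorization_gcd ha' hn, Finsupp.inf_apply] at hmin
  omega

theorem factorization_le_of_factorization_ne {p p' q q' n ℓ : ℕ} (hpq : p * q ≠ 0) (hn : n ≠ 0)
    (hprod : p * q = p' * q') (hp : gcd p n = gcd p' n) (hq : gcd q n = gcd q' n)
    (hℓ : p.factorization ℓ ≠ p'.factorization ℓ) :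
    n.factorization ℓ ≤ p.factorization ℓ ∧ n.factorization ℓ ≤ q.factorization ℓ := by
  have hp'q' : p' * q' ≠ 0 := hprod ▸ hpq
  have hsum : (p * q).factorization ℓ = (p' * q').factorization ℓ := by rw [hprod]
  simp only [factorization_mul (left_ne_zero_of_mul hpq) (right_ne_zero_of_mul hpq),
    factorization_mul (left_ne_zero_of_mul hp'q') (right_ne_zero_of_mul hp'q'),
    Finsupp.add_apply] at hsum
  exact ⟨factorization_le_of_gcd_eq (left_ne_zero_of_mul hpq) (left_ne_zero_of_mul hp'q') hn hp
      hℓ,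
    factorization_le_of_gcd_eq (right_ne_zero_of_mul hpq) (right_ne_zero_of_mul hp'q') hn hq
      (by omega)⟩

theorem mul_dvd_of_dvd_div_of_factorization_le {r n x y δ : ℕ} (hr : r ≠ 0) (hn : n ≠ 0)
    (hx : x ∣ r) (hxy : x * y ∣ r * n) (hδ : δ ∣ r * n / (x * y))
    (hδn : ∀ ℓ ∈ δ.primeFactors, n.factorization ℓ ≤ y.factorization ℓ) : δ * x ∣ r := by
  have hrn : r * n ≠ 0 := mul_ne_zero hr hn
  have hxy0 : x * y ≠ 0 := ne_zero_of_dvd_ne_zero hrn hxy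
  have he0 : r * n / (x * y) ≠ 0 := (div_ne_zero_iff_of_dvd hxy).mpr ⟨hrn, hxy0⟩
  have hδ0 : δ ≠ 0 := ne_zero_of_dvd_ne_zero he0 hδ
  have hx0 : x ≠ 0 := left_ne_zero_of_mul hxy0
  have hy0 : y ≠ 0 := right_ne_zero_of_mul hxy0
  refine (factorization_prime_le_iff_dvd (mul_ne_zero hδ0 hx0) hr).mp fun ℓ hℓ => ?_
  have hxr := (factorization_le_iff_dvd hx0 hr).mpr hx ℓ
  have hxyrn := (factorization_le_iff_dvd hxy0 hrn).mpr hxy ℓ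
  have hδe := (factorization_le_iff_dvd hδ0 he0).mpr hδ ℓ
  simp only [factorization_mul hδ0 hx0, factorization_mul hx0 hy0, factorization_mul hr hn,
    factorization_div hxy, Finsupp.add_apply, Finsupp.tsub_apply] at hxyrn hδe ⊢
  by_cases hℓδ : ℓ ∈ δ.primeFactors
  · have := hδn ℓ hℓδ
    omega
  · rw [← support_factorization, Finsupp.notMem_support_iff] at hℓδ
    omega

theorem mul_dvd_and_mul_dvd_of_eq_primePart {r n p p' q q' δ : ℕ} (hr : r ≠ 0) (hn : n ≠ 0)
    (hp : p ∣ r) (hq : q ∣ r) (hprod : p * q = p' * q') (hdvd : p * q ∣ r * n)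
    (h1 : gcd p n = gcd p' n) (h2 : gcd q n = gcd q' n)
    (hδ : δ = primePart (fun π => π.Prime ∧ p.factorization π ≠ p'.factorization π)
      (r * n / (p * q))) :
    δ * p ∣ r ∧ δ * q ∣ r := by
  have hpq0 : p * q ≠ 0 := ne_zero_of_dvd_ne_zero (mul_ne_zero hr hn) hdvd
  have hspecial : ∀ ℓ ∈ δ.primeFactors,
      n.factorization ℓ ≤ p.factorization ℓ ∧ n.factorization ℓ ≤ q.factorization ℓ :=
    fun ℓ hℓ => factorization_le_of_factorization_ne hpq0 hn hprod h1 h2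
      (of_mem_primeFactors_primePart _ _ (hδ ▸ hℓ)).2
  have hδe : δ ∣ r * n / (p * q) := hδ ▸ primePart_dvd _ _
  refine ⟨mul_dvd_of_dvd_div_of_factorization_le hr hn hp hdvd hδe
    fun ℓ hℓ => (hspecial ℓ hℓ).2, ?_⟩
  rw [mul_comm p q] at hdvd hδe
  exact mul_dvd_of_dvd_div_of_factorization_le hr hn hq hdvd hδe fun ℓ hℓ => (hspecial ℓ hℓ).1

end Nat

theorem exists_dvd_sub_mul_of_coprime {η δ : ℕ} (h : η.Coprime δ) (x : ℤ) :
    ∃ k : ℤ, (δ : ℤ) ∣ x - k * η := by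
  obtain ⟨A, B, hAB⟩ := Nat.isCoprime_iff_coprime.mpr h
  exact ⟨x * A, x * B, by linear_combination (-x) * hAB⟩

section ZModPow

variable {M : Type*} {δ : ℕ} [NeZero δ]

def zmodPowHom [Monoid M] (x : M) (hx : x ^ δ = 1) : Multiplicative (ZMod δ) →* M where
  toFun k := x ^ (toAdd k).val
  map_one' := by simp
  map_mul' a b := by
    simp only [toAdd_mul, ZMod.val_add, ← pow_eq_pow_mod _ hx, pow_add]

theorem zmodPowHom_apply [Monoid M] (x : M) (hx : x ^ δ = 1) (k : Multiplicative (ZMod δ)) :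
    zmodPowHom x hx k = x ^ (toAdd k).val := rfl

theorem zmodPowHom_ofAdd_intCast [Group M] (x : M) (hx : x ^ δ = 1) (k : ℤ) :
    zmodPowHom x hx (ofAdd (k : ZMod δ)) = x ^ k := by
  rw [zmodPowHom_apply, toAdd_ofAdd, ← zpow_natCast, ZMod.val_intCast,
    ← zpow_eq_zpow_emod' k hx]

end ZModPow

section Splitting

theorem commute_mk_of_forall_commute {G : Type*} [Group G] {N : Subgroup G} [N.Normal] {z : G}
    (hz : ∀ g, Commute g z) (y : G ⧸ N) : Commute y (z : G ⧸ N) :=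
  QuotientGroup.induction_on y fun g => (hz g).map (QuotientGroup.mk' N)

variable {A : Type*} [Group A] {G H N : Subgroup A}
  [(N.subgroupOf G).Normal] [(N.subgroupOf H).Normal]

theorem nonempty_quotient_mulEquiv_prod_zmod (hHG : H ≤ G) (hNH : N ≤ H) {z : A} (hzG : z ∈ G)
    (hz : ∀ g ∈ G, Commute g z) {δ : ℕ} [NeZero δ] (hzδ : z ^ δ ∈ N)
    (hgen : ∀ g ∈ G, ∃ k : ℤ, g * z ^ (-k) ∈ H) (hord : ∀ k : ℕ, z ^ k ∈ H → δ ∣ k) :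
    Nonempty (G ⧸ N.subgroupOf G ≃* (H ⧸ N.subgroupOf H) × Multiplicative (ZMod δ)) := by
  set ι : H ⧸ N.subgroupOf H →* G ⧸ N.subgroupOf G :=
    QuotientGroup.map _ _ (Subgroup.inclusion hHG) fun h hh => hh
  set zbar : G ⧸ N.subgroupOf G := QuotientGroup.mk (⟨z, hzG⟩ : G)
  have hzbar : zbar ^ δ = 1 := (QuotientGroup.eq_one_iff _).mpr hzδ
  have hcomm : ∀ x k, Commute (ι x) (zmodPowHom zbar hzbar k) := fun x _ =>
    (commute_mk_of_forall_commute (z := (⟨z, hzG⟩ : G))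
      (fun g => Subtype.ext (hz g g.2)) (ι x)).pow_right _
  set ψ := ι.noncommCoprod (zmodPowHom zbar hzbar) hcomm
  have hψ : ∀ (h : H) (k : ℤ), ψ (QuotientGroup.mk h, ofAdd (k : ZMod δ)) =
      QuotientGroup.mk (Subgroup.inclusion hHG h * ⟨z, hzG⟩ ^ k) := by
    intro h k
    rw [MonoidHom.noncommCoprod_apply, zmodPowHom_ofAdd_intCast]
    rfl
  have hinj : Function.Injective ψ := by
    rw [injective_iff_map_eq_one]
    rintro ⟨x, k⟩ hxk
    induction x using QuotientGroup.induction_on with | H h => ?_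
    obtain ⟨v, hv, rfl⟩ : ∃ v < δ, k = ofAdd ((v : ℤ) : ZMod δ) :=
      ⟨_, ZMod.val_lt (toAdd k), by rw [Int.cast_natCast, ZMod.natCast_zmod_val, ofAdd_toAdd]⟩
    rw [hψ, QuotientGroup.eq_one_iff] at hxk
    have hN : (h : A) * z ^ v ∈ N := by simpa [Subgroup.mem_subgroupOf] using hxk
    have hzv : z ^ v ∈ H := by simpa using H.mul_mem (H.inv_mem h.2) (hNH hN)
    obtain rfl : v = 0 := Nat.eq_zero_of_dvd_of_lt (hord v hzv) hv
    rw [pow_zero, mul_one] at hN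
    exact Prod.ext ((QuotientGroup.eq_one_iff _).mpr hN) (by simp)
  have hsurj : Function.Surjective ψ := by
    intro y
    induction y using QuotientGroup.induction_on with | H g => ?_
    obtain ⟨k, hk⟩ := hgen g g.2
    refine ⟨(QuotientGroup.mk ⟨_, hk⟩, ofAdd (k : ZMod δ)), ?_⟩
    rw [hψ]
    congr 1
    ext
    simp
  exact ⟨(MulEquiv.ofBijective ψ ⟨hinj, hsurj⟩).symm⟩

end Splitting

theorem intCast_mem_zmultiples_natCast_iff {r d : ℕ} (hd : d ∣ r) (x : ℤ) :
    (x : ZMod r) ∈ AddSubgroup.zmultiples (d : ZMod r) ↔ (d : ℤ) ∣ x := by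
  rw [AddSubgroup.mem_zmultiples_iff]
  constructor
  · rintro ⟨k, hk⟩
    rw [zsmul_eq_mul, ← Int.cast_natCast, ← Int.cast_mul, ZMod.intCast_eq_intCast_iff_dvd_sub] at hk
    have := (Int.natCast_dvd_natCast.mpr hd).trans hk
    simpa using dvd_add this (Dvd.intro_left k rfl)
  · rintro ⟨t, rfl⟩
    exact ⟨t, by push_cast; ring⟩

theorem Grpn_le_Grpn_of_dvd {r d d' : ℕ} (n : ℕ) (h : d ∣ d') : Grpn r d' n ≤ Grpn r d n := by
  obtain ⟨t, rfl⟩ := h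
  have hle : AddSubgroup.zmultiples ((d * t : ℕ) : ZMod r) ≤ AddSubgroup.zmultiples (d : ZMod r) :=
    AddSubgroup.zmultiples_le.mpr ⟨t, by simp [mul_comm]⟩
  exact fun g hg => hle hg

theorem toAdd_DeltaHom_cEl_zpow (r n : ℕ) (k : ℤ) :
    toAdd (DeltaHom r n (cEl r n ^ k)) = ((k * n : ℤ) : ZMod r) := by
  rw [map_zpow, toAdd_zpow, cEl, DeltaHom, SemidirectProduct.lift_inl]
  simp [sumHom, zsmul_eq_mul]

theorem cEl_zpow_mem_Grpn_iff {r d : ℕ} (n : ℕ) (hd : d ∣ r) (k : ℤ) :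
    cEl r n ^ k ∈ Grpn r d n ↔ (d : ℤ) ∣ k * n := by
  change toAdd (DeltaHom r n (cEl r n ^ k)) ∈ AddSubgroup.zmultiples (d : ZMod r) ↔ _
  rw [toAdd_DeltaHom_cEl_zpow, intCast_mem_zmultiples_natCast_iff hd]

theorem cEl_pow_mem_Grpn_iff {r d : ℕ} (n : ℕ) (hd : d ∣ r) (k : ℕ) :
    cEl r n ^ k ∈ Grpn r d n ↔ d ∣ k * n := by
  rw [← zpow_natCast, cEl_zpow_mem_Grpn_iff n hd, ← Int.natCast_mul, Int.natCast_dvd_natCast]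

theorem nonempty_Gpq_mulEquiv_prod {r n p q δ m η : ℕ} [NeZero δ] (hp0 : 0 < p) (hδp : δ * p ∣ r)
    (hm : m * δ = r / q) (hnm : n * m = p * η) (hcop : η.Coprime δ) :
    Nonempty (Gpq r p q n ≃* Gpq r (δ * p) q n × Multiplicative (ZMod δ)) := by
  have hp : p ∣ r := (dvd_mul_left p δ).trans hδp
  have : ((CsubQ r q n).subgroupOf (Grpn r p n)).Normal := CsubIn_normal r p q n
  have : ((CsubQ r q n).subgroupOf (Grpn r (δ * p) n)).Normal := CsubIn_normal r (δ * p) q n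
  refine nonempty_quotient_mulEquiv_prod_zmod (Grpn_le_Grpn_of_dvd n (dvd_mul_left p δ)) ?_
    ((cEl_pow_mem_Grpn_iff n hp m).mpr ⟨η, by rw [mul_comm, hnm]⟩)
    (fun g _ => Commute.pow_right (Subgroup.mem_center_iff.mp (cEl_mem_center r n) g) m) ?_ ?_ ?_
  · refine Subgroup.zpowers_le.mpr ((cEl_pow_mem_Grpn_iff n hδp _).mpr ⟨η, ?_⟩)
    rw [← hm]
    linear_combination δ * hnm
  · rw [← pow_mul, hm]
    exact Subgroup.mem_zpowers _
  · intro g hg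
    obtain ⟨u, hu⟩ := AddSubgroup.mem_zmultiples_iff.mp hg
    obtain ⟨k, t, ht⟩ := exists_dvd_sub_mul_of_coprime hcop u
    refine ⟨k, ?_⟩
    change toAdd (DeltaHom r n _) ∈ AddSubgroup.zmultiples ((δ * p : ℕ) : ZMod r)
    rw [map_mul, toAdd_mul, ← hu, ← zpow_natCast, ← zpow_mul, toAdd_DeltaHom_cEl_zpow,
      zsmul_eq_mul, ← Int.cast_natCast p, ← Int.cast_mul, ← Int.cast_add,
      intCast_mem_zmultiples_natCast_iff hδp]
    have hnm' : (n * m : ℤ) = p * η := by exact_mod_cast hnm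
    exact ⟨t, by push_cast; linear_combination p * ht - k * hnm'⟩
  · intro k hk
    rw [← pow_mul, cEl_pow_mem_Grpn_iff n hδp,
      show m * k * n = p * (η * k) by linear_combination k * hnm, mul_comm δ p] at hk
    exact hcop.symm.dvd_of_dvd_mul_left (Nat.dvd_of_mul_dvd_mul_left hp0 hk)

theorem Gpq_iso_prod_of_special_decomposition_general
    (r n p p' q q' : ℕ) (hr : 0 < r) (hn : 0 < n)
    (hp : p ∣ r) (hq : q ∣ r)
    (hprod : p * q = p' * q') (hdvd : p * q ∣ r * n)
    (h1 : Nat.gcd p n = Nat.gcd p' n) (h2 : Nat.gcd q n = Nat.gcd q' n)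
    (δ : ℕ)
    (hδ : δ = ∏ π ∈ (r * n / (p * q)).primeFactors,
        if π.Prime ∧ p.factorization π ≠ p'.factorization π
        then π ^ (r * n / (p * q)).factorization π else 1) :
    δ * p ∣ r ∧ δ * p * q ∣ r * n ∧
      Nonempty (Gpq r p q n ≃* Gpq r (δ * p) q n × Multiplicative (ZMod δ)) := by
  rw [← Nat.primePart_eq_prod_ite] at hδ
  obtain ⟨hδp, hδq⟩ :=
    Nat.mul_dvd_and_mul_dvd_of_eq_primePart hr.ne' hn.ne' hp hq hprod hdvd h1 h2 hδ
  have hcop : (r * n / (p * q) / δ).Coprime δ := hδ ▸ Nat.coprime_div_primePart _ _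
  have hδ0 : δ ≠ 0 := hδ ▸ Nat.primePart_ne_zero _ _
  have hq0 : q ≠ 0 := ne_zero_of_dvd_ne_zero hr.ne' hq
  obtain ⟨m, hm⟩ := hδq
  obtain ⟨η, hη⟩ : δ ∣ r * n / (p * q) := hδ ▸ Nat.primePart_dvd _ _
  have hrn : r * n = p * q * (δ * η) := by rw [← hη, Nat.mul_div_cancel' hdvd]
  have : NeZero δ := ⟨hδ0⟩
  refine ⟨hδp, ⟨η, by rw [hrn]; ring⟩, nonempty_Gpq_mulEquiv_prod (m := m) (η := η)
    (Nat.pos_of_dvd_of_pos hp hr) hδp ?_ ?_ ?_⟩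
  · rw [hm, show δ * q * m = q * (m * δ) by ring,
      Nat.mul_div_cancel_left _ (Nat.pos_of_ne_zero hq0)]
  · refine Nat.eq_of_mul_eq_mul_left (Nat.pos_of_ne_zero (mul_ne_zero hδ0 hq0)) ?_
    linear_combination hrn - n * hm
  · rwa [hη, Nat.mul_div_cancel_left _ (Nat.pos_of_ne_zero hδ0)] at hcop

/-- Assume `gcd(p,n) = gcd(p',n)` and `gcd(q,n) = gcd(q',n)` with
`pq = p'q'` dividing `rn`.  A prime is *special* if it appears with different
multiplicities in `p` and `p'`.  Write `rn/(pq) = η·δ` where `δ` is the largest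
divisor of `rn/(pq)` all of whose prime factors are special.  Then `G(r,δp,q,n)`
is well-defined and `G(r,p,q,n) ≅ G(r,δp,q,n) × ℤ/δℤ`. -/
theorem Gpq_iso_prod_of_special_decomposition
    (r n p p' q q' : ℕ) (hr : 0 < r) (hn : 0 < n)
    (hp : p ∣ r) (hp' : p' ∣ r) (hq : q ∣ r) (hq' : q' ∣ r)
    (hprod : p * q = p' * q') (hdvd : p * q ∣ r * n)
    (h1 : Nat.gcd p n = Nat.gcd p' n) (h2 : Nat.gcd q n = Nat.gcd q' n)
    (δ : ℕ)
    (hδ : δ = ∏ π ∈ (r * n / (p * q)).primeFactors,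
        if π.Prime ∧ p.factorization π ≠ p'.factorization π
        then π ^ (r * n / (p * q)).factorization π else 1) :
    δ * p ∣ r ∧ δ * p * q ∣ r * n ∧
      Nonempty (Gpq r p q n ≃* Gpq r (δ * p) q n × Multiplicative (ZMod δ)) :=
  Gpq_iso_prod_of_special_decomposition_general r n p p' q q' hr hn hp hq hprod hdvd h1 h2 δ hδ
end

section
/- Let r be a positive integer and let p, q be positive divisors of r with pq dividing 2r. Then the group G(r,p,q,2) has no class-preserving outer automorphisms: every automorphism ν of G(r,p,q,2) such that ν(g) is conjugate to g for all g ∈ G(r,p,q,2) is an inner automorphism, i.e., there exists x ∈ G(r,p,q,2) with ν(g) = xgx⁻¹ for all g. -/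
open SemidirectProduct Multiplicative

/-!
The image `A` of the diagonal subgroup `(ℤ/rℤ)²` is an abelian subgroup of index two in
`G(r,p,q,2)`, and a class-preserving automorphism `ν` of a group with an abelian subgroup `A` of
index two is inner. Indeed, fix `t ∉ A`; composing `ν` with an inner automorphism we may assume
`ν t = t`. Since `A` is abelian and `G = A ∪ A t`, the conjugacy class of `a ∈ A` is contained
in `{a, t a t⁻¹}`, so `A` is the union of the subgroups on which `ν` agrees with the identity and
with conjugation by `t`. A group is not the union of two proper subgroups, so `ν` agrees with
one of them on `A`, hence on `⟨A, t⟩ = G`.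
-/

open scoped Nat

namespace Subgroup

variable {G : Type*} [Group G] {A : Subgroup G}

theorem mul_inv_mem_of_index_eq_two (hA : A.index = 2) {t g : G} (ht : t ∉ A) (hg : g ∉ A) :
    g * t⁻¹ ∈ A := by
  rw [mul_mem_iff_of_index_two hA, inv_mem_iff]
  tauto

theorem monoidHom_ext_of_index_eq_two {M : Type*} [Monoid M] {f g : G →* M}
    (hA : A.index = 2) (hfg : A ≤ f.eqLocus g) {t : G} (ht : t ∉ A) (hft : f t = g t) :
    f = g := by
  ext x
  by_cases hx : x ∈ A
  · exact hfg hx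
  · have hxt : f (x * t⁻¹) = g (x * t⁻¹) := hfg (mul_inv_mem_of_index_eq_two hA ht hx)
    calc f x = f (x * t⁻¹) * f t := by rw [← map_mul, inv_mul_cancel_right]
      _ = g (x * t⁻¹) * g t := by rw [hxt, hft]
      _ = g x := by rw [← map_mul, inv_mul_cancel_right]

theorem eq_or_eq_conj_of_isConj [IsMulCommutative A] (hA : A.index = 2) {t a b : G}
    (ht : t ∉ A) (ha : a ∈ A) (hab : IsConj a b) : b = a ∨ b = t * a * t⁻¹ := by
  obtain ⟨c, rfl⟩ := isConj_iff.mp hab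
  by_cases hc : c ∈ A
  · left
    rw [setLike_mul_comm hc ha, mul_inv_cancel_right]
  · right
    have hta : t * a * t⁻¹ ∈ A := (normal_of_index_eq_two hA).conj_mem a ha t
    calc c * a * c⁻¹ = (c * t⁻¹) * (t * a * t⁻¹) * (c * t⁻¹)⁻¹ := by group
      _ = t * a * t⁻¹ := by
        rw [setLike_mul_comm (mul_inv_mem_of_index_eq_two hA ht hc) hta, mul_inv_cancel_right]

end Subgroup

theorem MulAut.exists_eq_conj_of_forall_isConj {G : Type*} [Group G] {A : Subgroup G}
    [IsMulCommutative A] (hA : A.index = 2) (ν : MulAut G) (hν : ∀ g, IsConj g (ν g)) :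
    ∃ x : G, ∀ g, ν g = x * g * x⁻¹ := by
  obtain ⟨t, ht⟩ := SetLike.exists_not_mem_of_ne_top A fun h => by simp [h] at hA
  obtain ⟨s, hs⟩ := isConj_iff.mp (hν t)
  set μ : G →* G := (MulAut.conj s⁻¹ * ν).toMonoidHom
  have hμ_apply (g : G) : μ g = s⁻¹ * ν g * s := by simp [μ]
  have hμt : μ t = t := by rw [hμ_apply, ← hs]; group
  have hcover : (A : Set G) ⊆
      μ.eqLocus (MulAut.conj (1 : G) : G →* G) ∪ μ.eqLocus (MulAut.conj t : G →* G) := by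
    intro a ha
    have hconj : IsConj a (μ a) := (hν a).trans (isConj_iff.mpr ⟨s⁻¹, by rw [hμ_apply]; group⟩)
    rcases A.eq_or_eq_conj_of_isConj hA ht ha hconj with h | h
    · exact Or.inl (show μ a = MulAut.conj (1 : G) a by simp [h])
    · exact Or.inr (show μ a = MulAut.conj t a by simp [h])
  obtain ⟨x, hxt, hAx⟩ : ∃ x, x * t * x⁻¹ = t ∧ A ≤ μ.eqLocus (MulAut.conj x : G →* G) := by
    rcases SubgroupClass.subset_union.mp hcover with h | h
    exacts [⟨1, by group, h⟩, ⟨t, by group, h⟩]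
  have hμx : μ = (MulAut.conj x : G →* G) :=
    Subgroup.monoidHom_ext_of_index_eq_two hA hAx ht (by simpa [hμt] using hxt.symm)
  refine ⟨s * x, fun g => ?_⟩
  have hg : s⁻¹ * ν g * s = x * g * x⁻¹ := by rw [← hμ_apply, hμx]; simp
  calc ν g = s * (s⁻¹ * ν g * s) * s⁻¹ := by group
    _ = s * x * g * (s * x)⁻¹ := by rw [hg]; group

theorem CsubIn_le_ker_rightHom (r p q n : ℕ) :
    CsubIn r p q n ≤ (rightHom.comp (Grpn r p n).subtype).ker := by
  intro x hx
  obtain ⟨k, hk⟩ := Subgroup.mem_zpowers_iff.mp (show (x : GG r n) ∈ CsubQ r q n from hx)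
  rw [MonoidHom.mem_ker, MonoidHom.comp_apply, Subgroup.coe_subtype, ← hk, cEl, ← map_pow,
    ← map_zpow, rightHom_inl]

theorem inr_mem_Grpn (r p n : ℕ) (π : Equiv.Perm (Fin n)) : (inr π : GG r n) ∈ Grpn r p n := by
  show DeltaHom r n (inr π) ∈ pZ r p
  rw [DeltaHom, lift_inr]
  exact one_mem _

namespace Gpq

noncomputable def permHom (r p q n : ℕ) : Gpq r p q n →* Equiv.Perm (Fin n) :=
  QuotientGroup.lift _ _ (CsubIn_le_ker_rightHom r p q n)

theorem permHom_surjective (r p q n : ℕ) : Function.Surjective (permHom r p q n) :=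
  fun π => ⟨Gmk r p q n ⟨inr π, inr_mem_Grpn r p n π⟩, rfl⟩

instance isMulCommutative_ker_permHom (r p q n : ℕ) :
    IsMulCommutative (permHom r p q n).ker := by
  rw [permHom, QuotientGroup.ker_lift, ← MonoidHom.comap_ker, ← range_inl_eq_ker_rightHom]
  have := Subgroup.comap_injective_isMulCommutative (H := (inl : _ →* GG r n).range)
    (Grpn r p n).subtype_injective
  infer_instance

theorem index_ker_permHom (r p q n : ℕ) : (permHom r p q n).ker.index = n ! := by
  rw [Subgroup.index_ker, MonoidHom.range_eq_top_of_surjective _ (permHom_surjective r p q n),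
    Subgroup.card_top, Nat.card_perm, Nat.card_fin]

end Gpq

theorem Gpq_rank_two_class_preserving_is_inner_general
    (r p q : ℕ) (ν : MulAut (Gpq r p q 2)) (hν : ∀ g : Gpq r p q 2, IsConj g (ν g)) :
    ∃ x : Gpq r p q 2, ∀ g : Gpq r p q 2, ν g = x * g * x⁻¹ :=
  MulAut.exists_eq_conj_of_forall_isConj (Gpq.index_ker_permHom r p q 2) ν hν

/-- The group `G(r,p,q,2)` has no class-preserving outer
automorphisms: every automorphism sending each element to a conjugate is inner. -/
theorem Gpq_rank_two_class_preserving_is_inner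
    (r p q : ℕ) (hr : 0 < r) (hp : p ∣ r) (hq : q ∣ r) (hdvd : p * q ∣ 2 * r)
    (ν : MulAut (Gpq r p q 2)) (hν : ∀ g : Gpq r p q 2, IsConj g (ν g)) :
    ∃ x : Gpq r p q 2, ∀ g : Gpq r p q 2, ν g = x * g * x⁻¹ :=
  Gpq_rank_two_class_preserving_is_inner_general r p q ν hν
end
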